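/- Let G be a strongly topologically orderable gyrogroup in which the singleton {1} is a Gδ-set. Then G is metrizable. -/

import Mathlib

open Set Topology

universe u

class Gyrogroup (G : Type u) where
  op : G → G → G
  one : G
  inv : G → G
  gyr : G → G → G ≃ G
  one_op : ∀ g, op one g = g
  op_one : ∀ g, op g one = g
  inv_op : ∀ g, op (inv g) g = one
  op_inv : ∀ g, op g (inv g) = one
  unique_one : ∀ e : G, (∀ g, op e g = g ∧ op g e = g) → e = one
  unique_inv : ∀ g h : G, (op h g = one ∧ op g h = one) → h = inv g
  gyr_op : ∀ g h f, op g (op h f) = op (op g h) (gyr g h f)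
  gyr_hom : ∀ g h a b, gyr g h (op a b) = op (gyr g h a) (gyr g h b)
  loop : ∀ g h, gyr g h = gyr (op g h) h

namespace Gyrogroup

variable {G : Type u} [Gyrogroup G]

/-- `H` is a subgyrogroup: nonempty and a gyrogroup under the restricted operations. -/
def IsSubgyrogroup (H : Set G) : Prop :=
  H.Nonempty ∧ one ∈ H ∧
  (∀ a ∈ H, ∀ b ∈ H, op a b ∈ H) ∧
  (∀ a ∈ H, inv a ∈ H) ∧
  (∀ a ∈ H, ∀ b ∈ H, Set.BijOn (gyr a b) H H)

/-- `H` is an L-subgyrogroup: `gyr g h` fixes `H` setwise for every `g ∈ G`, `h ∈ H`. -/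
def IsLSubgyrogroup (H : Set G) : Prop :=
  IsSubgyrogroup H ∧ ∀ g : G, ∀ h ∈ H, (gyr g h) '' H = H

def leftCoset (a : G) (H : Set G) : Set G := (fun h => op a h) '' H

/-- The subgyrogroup generated by `S`. -/
def generatedSubgyrogroup (S : Set G) : Set G :=
  ⋂₀ {H : Set G | IsSubgyrogroup H ∧ S ⊆ H}

/-- The gyrogroup operations are continuous (topological gyrogroup). -/
def ContinuousGyroOps (G : Type u) [Gyrogroup G] [TopologicalSpace G] : Prop :=
  Continuous (fun p : G × G => op p.1 p.2) ∧ Continuous (inv : G → G)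

/-- The topology coincides with the order topology of some linear order. -/
def TopologicallyOrderable (G : Type u) [t : TopologicalSpace G] : Prop :=
  ∃ l : LinearOrder G, t = TopologicalSpace.generateFrom
      {s : Set G | ∃ a : G, s = {x | l.lt a x} ∨ s = {x | l.lt x a}}

/-- A strongly topological gyrogroup: a topological gyrogroup with a neighborhood base
at `1` whose members are invariant under all gyroautomorphisms. -/
def StronglyTopologicalGyrogroup (G : Type u) [Gyrogroup G] [TopologicalSpace G] : Prop :=
  ContinuousGyroOps G ∧
  ∃ 𝒰 : Set (Set G), (∀ U ∈ 𝒰, U ∈ nhds (one : G)) ∧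
    (∀ V ∈ nhds (one : G), ∃ U ∈ 𝒰, U ⊆ V) ∧
    (∀ U ∈ 𝒰, ∀ x y : G, (gyr x y) '' U = U)

def StronglyTopologicallyOrderable (G : Type u) [Gyrogroup G] [TopologicalSpace G] : Prop :=
  StronglyTopologicalGyrogroup G ∧ TopologicallyOrderable G

end Gyrogroup

section Auxiliary

open Filter

namespace Gyrogroup

variable {G : Type u} [Gyrogroup G]

theorem left_cancel' {a x y : G} (h : op a x = op a y) : x = y := by
  have h2 : op (inv a) (op a x) = op (inv a) (op a y) := by rw [h]
  rw [gyr_op, gyr_op, inv_op, one_op, one_op] at h2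
  exact (gyr (inv a) a).injective h2

theorem gyr_one_left' (a b : G) : gyr one a b = b := by
  have h := gyr_op (one : G) a b
  rw [one_op, one_op] at h
  exact (left_cancel' h.symm)

theorem gyr_inv_left' (a b : G) : gyr (inv a) a b = b := by
  have h := loop (inv a) a
  rw [inv_op] at h
  rw [h, gyr_one_left']

theorem inv_op_cancel' (a b : G) : op (inv a) (op a b) = b := by
  rw [gyr_op, inv_op, one_op, gyr_inv_left']

theorem gyr_inv_right' (a b : G) : gyr a (inv a) b = b := by
  have h := loop a (inv a)
  rw [op_inv] at h
  rw [h, gyr_one_left']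

theorem op_inv_cancel' (a b : G) : op a (op (inv a) b) = b := by
  rw [gyr_op, op_inv, one_op, gyr_inv_right']

theorem inv_one' : (inv one : G) = one := by
  have h := inv_op (one : G); rwa [op_one] at h

theorem op_gyr_inv' (x v : G) : op (op x v) (gyr x v (inv v)) = x := by
  rw [← gyr_op, op_inv, op_one]

theorem leftCoset_eq' (x : G) (V : Set G) :
    leftCoset x V = {y | op (inv x) y ∈ V} := by
  ext y
  constructor
  · rintro ⟨v, hv, rfl⟩
    simpa [inv_op_cancel'] using hv
  · intro hy
    exact ⟨op (inv x) y, hy, op_inv_cancel' x y⟩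

theorem leftCoset_mono' (x : G) {V W : Set G} (h : V ⊆ W) :
    leftCoset x V ⊆ leftCoset x W :=
  Set.image_mono h

/-- Left translation as a homeomorphism. -/
def leftHomeo [TopologicalSpace G] (hc : ContinuousGyroOps G) (x : G) : G ≃ₜ G where
  toFun := fun y => op x y
  invFun := fun y => op (inv x) y
  left_inv := inv_op_cancel' x
  right_inv := op_inv_cancel' x
  continuous_toFun := hc.1.comp (continuous_const.prodMk continuous_id)
  continuous_invFun := hc.1.comp (continuous_const.prodMk continuous_id)

end Gyrogroup

/-- Every open set of a generated topology containing a point contains a finite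
intersection of subbasic sets containing that point. -/
theorem exists_finite_subbasis {X : Type*} {S : Set (Set X)} {O : Set X}
    (hO : TopologicalSpace.GenerateOpen S O) :
    ∀ x ∈ O, ∃ F : Set (Set X), F.Finite ∧ F ⊆ S ∧ x ∈ ⋂₀ F ∧ ⋂₀ F ⊆ O := by
  induction hO with
  | basic s hs =>
      intro x hx
      exact ⟨{s}, Set.finite_singleton _, Set.singleton_subset_iff.2 hs, by simpa, by simp⟩
  | univ =>
      intro x _
      exact ⟨∅, Set.finite_empty, Set.empty_subset _, by simp, by simp⟩
  | inter s t _ _ ihs iht =>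
      intro x hx
      obtain ⟨F1, hF1f, hF1S, hxF1, hF1⟩ := ihs x hx.1
      obtain ⟨F2, hF2f, hF2S, hxF2, hF2⟩ := iht x hx.2
      refine ⟨F1 ∪ F2, hF1f.union hF2f, Set.union_subset hF1S hF2S, ?_, ?_⟩
      · rw [Set.sInter_union]; exact ⟨hxF1, hxF2⟩
      · rw [Set.sInter_union]; exact fun y hy => ⟨hF1 hy.1, hF2 hy.2⟩
  | sUnion K _ ih =>
      intro x hx
      obtain ⟨s, hsK, hxs⟩ := hx
      obtain ⟨F, h1, h2, h3, h4⟩ := ih s hsK x hxs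
      exact ⟨F, h1, h2, h3, h4.trans (Set.subset_sUnion_of_mem hsK)⟩

end Auxiliary

namespace Gyrogroup
variable {G : Type u} [Gyrogroup G]

theorem inv_inv' (a : G) : inv (inv a) = a :=
  (unique_inv (inv a) a ⟨op_inv a, inv_op a⟩).symm

/-- Basic entourage of the left uniformity. -/
def gyroEnt (V : Set G) : Set (G × G) := {p : G × G | op (inv p.1) p.2 ∈ V}

theorem gyroEnt_mono {V W : Set G} (h : V ⊆ W) : gyroEnt V ⊆ gyroEnt W := fun _ hp => h hp

end Gyrogroup

open Gyrogroup
/-- A strongly topologically orderable gyrogroup in which `{1}` is a Gδ-set is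
metrizable. -/
theorem stmt13 {G : Type u} [Gyrogroup G] [TopologicalSpace G]
    (h : StronglyTopologicallyOrderable G)
    (hGδ : IsGδ ({one} : Set G)) :
    TopologicalSpace.MetrizableSpace G := by
  obtain ⟨⟨hc, 𝒰, h𝒰nhds, h𝒰base, h𝒰gyr⟩, l, ht⟩ := h
  letI : LinearOrder G := l
  -- Gδ data
  obtain ⟨T, hTopen, hTc, hT⟩ := hGδ
  have h1T : (one : G) ∈ ⋂₀ T := hT ▸ Set.mem_singleton _
  -- finite subbasic families around points of each member of T
  have hchoice : ∀ O : T, ∃ F : Set (Set G),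
      F.Finite ∧ F ⊆ {s : Set G | ∃ a : G, s = {x | l.lt a x} ∨ s = {x | l.lt x a}} ∧
        (one : G) ∈ ⋂₀ F ∧ ⋂₀ F ⊆ (O : Set G) := by
    intro O
    have hO1 : IsOpen (O : Set G) := hTopen O O.2
    rw [ht] at hO1
    exact exists_finite_subbasis hO1 _ (h1T O O.2)
  choose F hFfin hFS hF1 hFsub using hchoice
  haveI := hTc.to_subtype
  have hℛc : (⋃ O : T, F O).Countable := Set.countable_iUnion fun O => (hFfin O).countable
  have hℛmem : ∀ r ∈ ⋃ O : T, F O,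
      r ∈ {s : Set G | ∃ a : G, s = {x | l.lt a x} ∨ s = {x | l.lt x a}} ∧ (one : G) ∈ r := by
    intro r hr
    obtain ⟨O, hrO⟩ := Set.mem_iUnion.1 hr
    exact ⟨hFS O hrO, Set.mem_sInter.1 (hF1 O) r hrO⟩
  have hRsInter : ⋂₀ (⋃ O : T, F O) = {(one : G)} := by
    apply Set.Subset.antisymm
    · intro x hx
      rw [hT, Set.mem_sInter]
      intro O hO
      exact hFsub ⟨O, hO⟩
        (Set.mem_sInter.2 fun r hr => Set.mem_sInter.1 hx r (Set.mem_iUnion.2 ⟨⟨O, hO⟩, hr⟩))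
    · rintro x rfl
      exact Set.mem_sInter.2 fun r hr => (hℛmem r hr).2
  -- cofinality of the countable family among subbasic neighbourhoods of 1
  have hcof : ∀ s ∈ {s : Set G | ∃ a : G, s = {x | l.lt a x} ∨ s = {x | l.lt x a}},
      (one : G) ∈ s → ∃ r ∈ ⋃ O : T, F O, r ⊆ s := by
    intro s hsS h1s
    by_contra hcon
    push_neg at hcon
    obtain ⟨a, hrep | hrep⟩ := hsS
    · have ha1 : l.lt a one := by rw [hrep] at h1s; exact h1s
      have haR : a ∈ ⋂₀ (⋃ O : T, F O) := by
        refine Set.mem_sInter.2 fun r hr => ?_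
        obtain ⟨⟨b, hb | hb⟩, h1r⟩ := hℛmem r hr
        · have hb1 : l.lt b one := by rw [hb] at h1r; exact h1r
          rcases lt_or_ge b a with hba | hab
          · rw [hb]; exact hba
          · refine absurd ?_ (hcon r hr)
            intro x hx
            rw [hb] at hx
            rw [hrep]
            exact lt_of_le_of_lt hab hx
        · have h1b : l.lt one b := by rw [hb] at h1r; exact h1r
          rw [hb]; exact lt_trans ha1 h1b
      rw [hRsInter] at haR
      have := Set.mem_singleton_iff.1 haR
      rw [this] at ha1
      exact lt_irrefl _ ha1
    · have h1a : l.lt one a := by rw [hrep] at h1s; exact h1s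
      have haR : a ∈ ⋂₀ (⋃ O : T, F O) := by
        refine Set.mem_sInter.2 fun r hr => ?_
        obtain ⟨⟨b, hb | hb⟩, h1r⟩ := hℛmem r hr
        · have hb1 : l.lt b one := by rw [hb] at h1r; exact h1r
          rw [hb]; exact lt_trans hb1 h1a
        · have h1b : l.lt one b := by rw [hb] at h1r; exact h1r
          rcases lt_or_ge a b with hab | hba
          · rw [hb]; exact hab
          · refine absurd ?_ (hcon r hr)
            intro x hx
            rw [hb] at hx
            rw [hrep]
            exact lt_of_lt_of_le hx hba
      rw [hRsInter] at haR
      have := Set.mem_singleton_iff.1 haR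
      rw [this] at h1a
      exact lt_irrefl _ h1a
  -- the neighbourhood filter of 1 is countably generated
  have hnhds1 : 𝓝 (one : G) = ⨅ r ∈ ⋃ O : T, F O, Filter.principal r := by
    have hgen : 𝓝 (one : G) = ⨅ s ∈ {s : Set G | (one : G) ∈ s ∧
        s ∈ {s : Set G | ∃ a : G, s = {x | l.lt a x} ∨ s = {x | l.lt x a}}},
        Filter.principal s := by
      rw [ht]
      exact TopologicalSpace.nhds_generateFrom
    rw [hgen]
    refine le_antisymm
      (le_iInf₂ fun r hr => iInf₂_le r ⟨(hℛmem r hr).2, (hℛmem r hr).1⟩)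
      (le_iInf₂ fun s hs => ?_)
    obtain ⟨r, hrℛ, hrs⟩ := hcof s hs.2 hs.1
    exact le_trans (iInf₂_le r hrℛ) (Filter.principal_mono.2 hrs)
  haveI hcg : (𝓝 (one : G)).IsCountablyGenerated := by
    rw [hnhds1, iInf_subtype']
    haveI := hℛc.to_subtype
    infer_instance
  -- a countable gyr-invariant neighbourhood base at 1
  obtain ⟨W, hW⟩ := (𝓝 (one : G)).exists_antitone_basis
  have hWmem : ∀ n, W n ∈ 𝓝 (one : G) := fun n => hW.toHasBasis.mem_of_mem trivial
  have hUex : ∀ n : ℕ, ∃ U ∈ 𝒰, U ⊆ W n := fun n => h𝒰base (W n) (hWmem n)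
  choose U hU𝒰 hUW using hUex
  have hUnhds : ∀ n, U n ∈ 𝓝 (one : G) := fun n => h𝒰nhds _ (hU𝒰 n)
  have hUgyr : ∀ (n) (x y : G), (gyr x y) '' U n = U n := fun n => h𝒰gyr _ (hU𝒰 n)
  have hUcof : ∀ N ∈ 𝓝 (one : G), ∃ n, U n ⊆ N := by
    intro N hN
    obtain ⟨n, -, hn⟩ := hW.toHasBasis.mem_iff.1 hN
    exact ⟨n, (hUW n).trans hn⟩
  have hUsep : ∀ x : G, (∀ n, x ∈ U n) → x = one := by
    intro x hx
    have hxT : x ∈ ⋂₀ T := by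
      refine Set.mem_sInter.2 fun O hO => ?_
      obtain ⟨n, hn⟩ := hUcof O ((hTopen O hO).mem_nhds (h1T O hO))
      exact hn (hx n)
    rw [← hT] at hxT
    exact hxT
  have hN1 : 𝓝 (one : G) = ⨅ n, Filter.principal (U n) := by
    refine le_antisymm (le_iInf fun n => Filter.le_principal_iff.2 (hUnhds n))
      (Filter.le_def.2 fun N hN => ?_)
    obtain ⟨n, hn⟩ := hUcof N hN
    exact Filter.mem_iInf_of_mem n (Filter.mem_principal.2 hn)
  -- the left uniformity
  have hEdir : Directed (· ≥ ·) fun n => gyroEnt (U n) := by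
    intro n m
    obtain ⟨k, hk⟩ := hUcof (U n ∩ U m) (Filter.inter_mem (hUnhds n) (hUnhds m))
    exact ⟨k, gyroEnt_mono fun x hx => (hk hx).1, gyroEnt_mono fun x hx => (hk hx).2⟩
  have hbasis : (⨅ n, Filter.principal (gyroEnt (U n))).HasBasis (fun _ : ℕ => True)
      (fun n => gyroEnt (U n)) := Filter.hasBasis_iInf_principal hEdir
  have hsymm : Filter.Tendsto Prod.swap (⨅ n, Filter.principal (gyroEnt (U n)))
      (⨅ n, Filter.principal (gyroEnt (U n))) := by
    refine (hbasis.tendsto_iff hbasis).2 fun n _ => ?_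
    have h3 : Filter.Tendsto (inv : G → G) (𝓝 (one : G)) (𝓝 (inv (one : G))) :=
      hc.2.continuousAt
    rw [inv_one'] at h3
    obtain ⟨m, hm⟩ := hUcof _ (h3 (hUnhds n))
    refine ⟨m, trivial, ?_⟩
    rintro ⟨x, y⟩ hp
    have hv : op (inv x) y ∈ U m := hp
    have hinvv : inv (op (inv x) y) ∈ U n := hm hv
    have hgy : gyr x (op (inv x) y) (inv (op (inv x) y)) ∈ U n := by
      rw [← hUgyr n x (op (inv x) y)]
      exact ⟨_, hinvv, rfl⟩
    have hkey : op (inv (op x (op (inv x) y))) x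
        = gyr x (op (inv x) y) (inv (op (inv x) y)) := by
      have h2 := inv_op_cancel' (op x (op (inv x) y))
        (gyr x (op (inv x) y) (inv (op (inv x) y)))
      rw [op_gyr_inv'] at h2
      exact h2
    show op (inv y) x ∈ U n
    rw [← op_inv_cancel' x y, hkey]
    exact hgy
  have hcomp : ((⨅ n, Filter.principal (gyroEnt (U n))).lift' fun s => SetRel.comp s s)
      ≤ ⨅ n, Filter.principal (gyroEnt (U n)) := by
    refine hbasis.ge_iff.2 fun n _ => ?_
    have h2 : Filter.Tendsto (fun p : G × G => op p.1 p.2) (𝓝 ((one : G), (one : G)))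
        (𝓝 (op (one : G) one)) := hc.1.continuousAt
    rw [one_op] at h2
    have hUU : {p : G × G | op p.1 p.2 ∈ U n} ∈ 𝓝 ((one : G), (one : G)) := h2 (hUnhds n)
    rw [nhds_prod_eq] at hUU
    obtain ⟨A, hA, B, hB, hAB⟩ := Filter.mem_prod_iff.1 hUU
    obtain ⟨m, hm⟩ := hUcof (A ∩ B) (Filter.inter_mem hA hB)
    refine Filter.mem_of_superset (Filter.mem_lift' (hbasis.mem_of_mem (i := m) trivial)) ?_
    rintro ⟨x, z⟩ ⟨y, hxy, hyz⟩
    have hv : op (inv x) y ∈ U m := hxy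
    have hw' : op (inv y) z ∈ U m := hyz
    rw [← hUgyr m x (op (inv x) y)] at hw'
    obtain ⟨w, hwm, hww⟩ := hw'
    have hvw : op (op (inv x) y) w ∈ U n := hAB (show (op (inv x) y, w) ∈ A ×ˢ B from ⟨(hm hv).1, (hm hwm).2⟩)
    have hz : op x (op (op (inv x) y) w) = z := by
      rw [gyr_op, hww, op_inv_cancel', op_inv_cancel']
    have hxz : op (inv x) z = op (op (inv x) y) w := by
      rw [← hz, inv_op_cancel']
    show op (inv x) z ∈ U n
    rw [hxz]
    exact hvw
  have hnhds : ∀ x : G, 𝓝 x = Filter.comap (Prod.mk x)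
      (⨅ n, Filter.principal (gyroEnt (U n))) := by
    intro x
    have he : Filter.comap (fun y : G => op (inv x) y) (𝓝 (one : G)) = 𝓝 x := by
      have h1 := (leftHomeo hc (inv x)).comap_nhds_eq (one : G)
      have h2 : (leftHomeo hc (inv x)).symm (one : G) = x := by
        show op (inv (inv x)) one = x
        rw [op_one, inv_inv']
      rw [h2] at h1
      exact h1
    rw [← he, hN1, Filter.comap_iInf, Filter.comap_iInf]
    refine iInf_congr fun n => ?_
    rw [Filter.comap_principal, Filter.comap_principal]
    rfl
  letI u : UniformSpace G :=
    { toTopologicalSpace := ‹TopologicalSpace G›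
      uniformity := ⨅ n, Filter.principal (gyroEnt (U n))
      symm := hsymm
      comp := hcomp
      nhds_eq_comap_uniformity := hnhds }
  haveI : Filter.IsCountablyGenerated (uniformity G) := hbasis.isCountablyGenerated
  haveI : T0Space G := by
    refine t0Space_iff_uniformity.2 fun x y hxy => ?_
    have hall : ∀ n, op (inv x) y ∈ U n := fun n =>
      hxy (gyroEnt (U n)) (Filter.mem_iInf_of_mem n (Filter.mem_principal_self _))
    have h1 : op (inv x) y = one := hUsep _ hall
    have h2 := op_inv_cancel' x y
    rw [h1, op_one] at h2
    exact h2
  exact UniformSpace.metrizableSpace
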